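/- arXiv:2003.02588 — 3 statements merged into one kernel-verified Lean document; each statement's English description precedes it below -/
import Mathlib

section
/- For every x > 0, G(x) > F(x), where G(x) = (1/2)(1 - (1/2)·(1-Φ(x^{-1/2}))/(1-Φ(√2))) and F(x) = (1/2)(1 - 3x²). -/
/-!
Write `Q(t) = ∫_t^∞ e^{-s²/2} ds`, so that `1 - Φ(t) = Q(t)/√(2π)`; with `t = x^{-1/2}` the claim
is `t⁴ Q(t) < 6 Q(√2)`. The Mills-ratio bound `Q(t) ≤ e^{-t²/2}/t` gives
`t⁴ Q(t) ≤ t³ e^{-t²/2} ≤ 3√3 e^{-3/2} ≈ 1.159`, the maximum being read off from `y ≤ e^{y-1}`.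
On the other side `Q(√2) = √(π/2) - ∫_0^√2 e^{-s²/2} ds ≈ 0.1971`, and a Taylor polynomial of
`e^{-u}` on `[0, 1]` bounds the integral well enough to give `6 Q(√2) > 1.167`.
-/

open Real

/-- The standard normal cumulative distribution function. -/
noncomputable def normalCDF (x : ℝ) : ℝ :=
  ∫ t in Set.Iic x, (Real.sqrt (2 * Real.pi))⁻¹ * Real.exp (-t ^ 2 / 2)

/-- The standard normal density. -/
noncomputable def normalPDF (x : ℝ) : ℝ :=
  (Real.sqrt (2 * Real.pi))⁻¹ * Real.exp (-x ^ 2 / 2)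

open MeasureTheory Set

noncomputable def gaussianTail (y : ℝ) : ℝ := ∫ s in Ioi y, exp (-s ^ 2 / 2)

lemma integrable_exp_neg_sq_div_two : Integrable fun s : ℝ => exp (-s ^ 2 / 2) := by
  simpa [neg_div, div_eq_inv_mul] using integrable_exp_neg_mul_sq (b := 1 / 2) (by norm_num)

lemma integral_exp_neg_sq_div_two : ∫ s, exp (-s ^ 2 / 2) = √(2 * π) := by
  simpa [neg_div, div_eq_inv_mul] using integral_gaussian (1 / 2)

lemma gaussianTail_zero : gaussianTail 0 = √(2 * π) / 2 := by
  rw [gaussianTail]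
  simpa [neg_div, div_eq_inv_mul] using integral_gaussian_Ioi (1 / 2)

lemma gaussianTail_nonneg (y : ℝ) : 0 ≤ gaussianTail y :=
  setIntegral_nonneg measurableSet_Ioi fun _ _ => (exp_pos _).le

lemma one_sub_normalCDF_eq (y : ℝ) : 1 - normalCDF y = (√(2 * π))⁻¹ * gaussianTail y := by
  have hsplit : (∫ s in Iic y, exp (-s ^ 2 / 2)) + gaussianTail y = √(2 * π) :=
    (intervalIntegral.integral_Iic_add_Ioi integrable_exp_neg_sq_div_two.integrableOn
      integrable_exp_neg_sq_div_two.integrableOn).trans integral_exp_neg_sq_div_two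
  have hinv : (√(2 * π))⁻¹ * √(2 * π) = 1 := inv_mul_cancel₀ (by positivity)
  rw [normalCDF, integral_const_mul]
  linear_combination (-(√(2 * π))⁻¹) * hsplit - hinv

lemma gaussianTail_le {b : ℝ} (hb : 0 < b) : gaussianTail b ≤ exp (-b ^ 2 / 2) / b := by
  have hdom : ∀ s ∈ Ioi b, exp (-s ^ 2 / 2) ≤ exp (b ^ 2 / 2) * exp (-(b * s)) := by
    intro s hs
    rw [← exp_add, exp_le_exp]
    nlinarith [sq_nonneg (s - b)]
  have hint : IntegrableOn (fun s => exp (b ^ 2 / 2) * exp (-(b * s))) (Ioi b) := by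
    have h := (exp_neg_integrableOn_Ioi b hb).const_mul (exp (b ^ 2 / 2))
    simp only [neg_mul] at h
    exact h
  have hexp : ∫ s in Ioi b, exp (-(b * s)) = exp (-(b * b)) / b := by
    rw [integral_comp_mul_left_Ioi (fun s => exp (-s)) b hb, integral_exp_neg_Ioi, smul_eq_mul,
      inv_mul_eq_div]
  calc gaussianTail b ≤ ∫ s in Ioi b, exp (b ^ 2 / 2) * exp (-(b * s)) :=
        setIntegral_mono_on integrable_exp_neg_sq_div_two.integrableOn hint measurableSet_Ioi hdom
    _ = exp (-b ^ 2 / 2) / b := by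
        rw [integral_const_mul, hexp, mul_div_assoc', ← exp_add]
        ring_nf

lemma pow_mul_exp_neg_le (n : ℕ) {u : ℝ} (hu : 0 ≤ u) : u ^ n * exp (-u) ≤ n ^ n * exp (-n) := by
  rcases n.eq_zero_or_pos with rfl | hn
  · simpa using exp_le_one_iff.mpr (neg_nonpos.mpr hu)
  have hn' : (0 : ℝ) < n := Nat.cast_pos.mpr hn
  have hratio : u / n ≤ exp (u / n - 1) := by linarith [add_one_le_exp (u / n - 1)]
  have hpow : (u / n) ^ n ≤ exp (u - n) := by
    calc (u / n) ^ n ≤ exp (u / n - 1) ^ n := by gcongr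
      _ = exp (u - n) := by rw [← exp_nat_mul]; congr 1; field_simp
  calc u ^ n * exp (-u) = n ^ n * ((u / n) ^ n * exp (-u)) := by
        rw [div_pow]; field_simp
    _ ≤ n ^ n * (exp (u - n) * exp (-u)) := by gcongr
    _ = n ^ n * exp (-n) := by rw [← exp_add]; ring_nf

lemma exp_neg_le_taylor {u : ℝ} (hu₀ : 0 ≤ u) (hu₁ : u ≤ 1) :
    exp (-u) ≤ 1 - u + u ^ 2 / 2 - u ^ 3 / 6 + 5 * u ^ 4 / 96 := by
  -- `5 / 96 = (n + 1) / (n! * n)` at `n = 4` is the remainder constant of `Real.exp_bound`.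
  have h := Real.exp_bound (x := -u) (by rwa [abs_neg, abs_of_nonneg hu₀]) (n := 4) (by norm_num)
  rw [abs_neg, abs_of_nonneg hu₀] at h
  norm_num [Finset.sum_range_succ, Nat.factorial] at h
  linarith [(abs_le.mp h).2]

lemma integral_taylor_zero_sqrt_two_le :
    ∫ s in (0)..√2, (1 - s ^ 2 / 2 + s ^ 4 / 8 - s ^ 6 / 48 + 5 * s ^ 8 / 1536) ≤ 1.0588 := by
  have hP : ∀ s : ℝ, HasDerivAt (fun s => s - s ^ 3 / 6 + s ^ 5 / 40 - s ^ 7 / 336 + 5 * s ^ 9 / 13824)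
      (1 - s ^ 2 / 2 + s ^ 4 / 8 - s ^ 6 / 48 + 5 * s ^ 8 / 1536) s := fun s => by
    refine (((((hasDerivAt_id' (x := s)).fun_sub ((hasDerivAt_pow 3 s).div_const 6)).fun_add
      ((hasDerivAt_pow 5 s).div_const 40)).fun_sub ((hasDerivAt_pow 7 s).div_const 336)).fun_add
      (((hasDerivAt_pow 9 s).const_mul 5).div_const 13824)).congr_deriv ?_
    norm_num
    ring
  rw [intervalIntegral.integral_eq_sub_of_hasDerivAt (fun s _ => hP s)
    ((by fun_prop : Continuous _).intervalIntegrable _ _)]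
  have h2 : √2 ^ 2 = 2 := sq_sqrt (by norm_num)
  have hlt : √2 < 1.41422 := by rw [sqrt_lt' (by norm_num)]; norm_num
  have hodd : ∀ k : ℕ, √2 ^ (2 * k + 1) = 2 ^ k * √2 := fun k => by rw [pow_succ, pow_mul, h2]
  simp only [show (3 : ℕ) = 2 * 1 + 1 from rfl, show (5 : ℕ) = 2 * 2 + 1 from rfl,
    show (7 : ℕ) = 2 * 3 + 1 from rfl, show (9 : ℕ) = 2 * 4 + 1 from rfl, hodd]
  norm_num
  linarith

lemma integral_exp_neg_sq_div_two_zero_sqrt_two_le : ∫ s in (0)..√2, exp (-s ^ 2 / 2) ≤ 1.0588 := by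
  refine le_trans (intervalIntegral.integral_mono_on (sqrt_nonneg 2)
    ((by fun_prop : Continuous _).intervalIntegrable _ _)
    ((by fun_prop : Continuous _).intervalIntegrable _ _) fun s hs => ?_)
    integral_taylor_zero_sqrt_two_le
  have hs2 : s ^ 2 ≤ 2 := by
    simpa [sq_sqrt] using pow_le_pow_left₀ hs.1 hs.2 2
  calc exp (-s ^ 2 / 2) = exp (-(s ^ 2 / 2)) := by ring_nf
    _ ≤ _ := exp_neg_le_taylor (by positivity) (by linarith)
    _ = _ := by ring

lemma gaussianTail_sqrt_two_gt : 0.1945 < gaussianTail √2 := by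
  have hsplit : gaussianTail 0 = (∫ s in (0)..√2, exp (-s ^ 2 / 2)) + gaussianTail √2 := by
    rw [intervalIntegral.integral_of_le (sqrt_nonneg 2), gaussianTail, gaussianTail,
      ← setIntegral_union (Ioc_disjoint_Ioi le_rfl) measurableSet_Ioi
        integrable_exp_neg_sq_div_two.integrableOn integrable_exp_neg_sq_div_two.integrableOn,
      Ioc_union_Ioi_eq_Ioi (sqrt_nonneg 2)]
  have hhalf : 1.2533 < gaussianTail 0 := by
    rw [gaussianTail_zero, lt_div_iff₀ two_pos, lt_sqrt (by norm_num)]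
    linarith [pi_gt_d6]
  linarith [integral_exp_neg_sq_div_two_zero_sqrt_two_le]

lemma pow_four_mul_gaussianTail_lt {t : ℝ} (ht : 0 < t) :
    t ^ 4 * gaussianTail t < 6 * gaussianTail √2 := by
  have hmills : t ^ 4 * gaussianTail t ≤ t ^ 3 * exp (-t ^ 2 / 2) :=
    calc t ^ 4 * gaussianTail t ≤ t ^ 4 * (exp (-t ^ 2 / 2) / t) := by
          gcongr; exact gaussianTail_le ht
      _ = t ^ 3 * exp (-t ^ 2 / 2) := by field_simp
  have hmax : (t ^ 3 * exp (-t ^ 2 / 2)) ^ 2 ≤ 27 * exp (-3) := by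
    have h := pow_mul_exp_neg_le 3 (sq_nonneg t)
    push_cast at h
    calc (t ^ 3 * exp (-t ^ 2 / 2)) ^ 2 = (t ^ 2) ^ 3 * exp (-t ^ 2) := by
          rw [mul_pow, ← exp_nat_mul]; ring_nf
      _ ≤ 27 * exp (-3) := by linarith
  have hexp : 27 * exp (-3) < 1.35 := by
    have he : (20 : ℝ) < exp 3 := by
      calc (20 : ℝ) < 2.7182818283 ^ 3 := by norm_num
        _ < exp 1 ^ 3 := by gcongr; exact exp_one_gt_d9
        _ = exp 3 := by rw [← exp_nat_mul]; norm_num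
    rw [exp_neg, ← div_eq_mul_inv, div_lt_iff₀ (exp_pos 3)]
    linarith
  have htail : 0 ≤ t ^ 4 * gaussianTail t := mul_nonneg (by positivity) (gaussianTail_nonneg t)
  have hC := gaussianTail_sqrt_two_gt
  refine lt_of_pow_lt_pow_left₀ 2 (by linarith) ?_
  calc (t ^ 4 * gaussianTail t) ^ 2 ≤ (t ^ 3 * exp (-t ^ 2 / 2)) ^ 2 :=
        pow_le_pow_left₀ htail hmills 2
    _ < (6 * 0.1945) ^ 2 := by linarith
    _ < (6 * gaussianTail √2) ^ 2 := by gcongr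

lemma pow_four_mul_one_sub_normalCDF_lt {t : ℝ} (ht : 0 < t) :
    t ^ 4 * (1 - normalCDF t) < 6 * (1 - normalCDF √2) := by
  rw [one_sub_normalCDF_eq, one_sub_normalCDF_eq, mul_left_comm, mul_left_comm 6]
  exact mul_lt_mul_of_pos_left (pow_four_mul_gaussianTail_lt ht) (by positivity)

theorem stmt_3 (x : ℝ) (hx : 0 < x) :
    (1/2) * (1 - (1/2) * (1 - normalCDF ((Real.sqrt x)⁻¹)) / (1 - normalCDF (Real.sqrt 2))) >
      (1/2) * (1 - 3 * x ^ 2) := by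
  have ht : 0 < (√x)⁻¹ := by positivity
  have ht4 : ((√x)⁻¹) ^ 4 = (x ^ 2)⁻¹ := by
    rw [inv_pow, show 4 = 2 * 2 from rfl, pow_mul, sq_sqrt hx.le]
  have hD : 0 < 1 - normalCDF √2 := by
    rw [one_sub_normalCDF_eq]
    exact mul_pos (by positivity) (by linarith [gaussianTail_sqrt_two_gt])
  have hratio : (1 - normalCDF (√x)⁻¹) / (1 - normalCDF √2) < 6 * x ^ 2 := by
    have h := pow_four_mul_one_sub_normalCDF_lt ht
    rw [ht4, inv_mul_lt_iff₀ (by positivity)] at h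
    rw [div_lt_iff₀ hD]
    linarith
  rw [mul_div_assoc]
  linarith
end

section
/- For every integer k ≥ 2, with a = (k²+k-1)/(2k+1)² and b = (k²+k+1)/(2k+1)², one has (1/2)Φ(b^{-1/2}) + (1/2)Φ(a^{-1/2}) ≥ Φ(2), where Φ is the standard normal CDF. -/
/-!
Write `t ≤ 2 ≤ s` for the two arguments of `normalCDF`. The density `φ = normalPDF` decreases
on `[0, ∞)`, so `Φ(2) - Φ(t) ≤ (2 - t) φ(t)` and `(s - 2) φ(s) ≤ Φ(s) - Φ(2)`; it therefore
suffices that `(2 - t) φ(t) ≤ (s - 2) φ(s)`, i.e. `(2 - t) exp ((s² - t²) / 2) ≤ s - 2`.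
With `m = k² + k` one has `s² = (4m + 1)/(m - 1)`, `t² = (4m + 1)/(m + 1)` and
`(s² - t²)/2 = (4m + 1)/(m² - 1) ≤ 5/7`. Rational bounds on the square roots, and the bound of
`exp` on `[0, 5/7]` by its chord, reduce the claim to a cubic inequality in `m ≥ 6`.
-/

open Real

open Set

lemma integrable_normalPDF : MeasureTheory.Integrable normalPDF := by
  have h := (integrable_exp_neg_mul_sq (by norm_num : (0:ℝ) < 1 / 2)).const_mul
    (√(2 * π))⁻¹
  convert h using 3 with t
  rw [normalPDF]
  ring_nf

lemma normalCDF_sub_normalCDF (x y : ℝ) :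
    normalCDF y - normalCDF x = ∫ t in x..y, normalPDF t :=
  intervalIntegral.integral_Iic_sub_Iic integrable_normalPDF.integrableOn
    integrable_normalPDF.integrableOn

lemma antitoneOn_normalPDF : AntitoneOn normalPDF (Ici 0) := by
  intro u hu v _ huv
  unfold normalPDF
  gcongr

lemma sub_mul_normalPDF_le_normalCDF_sub {x y : ℝ} (hx : 0 ≤ x) (hxy : x ≤ y) :
    (y - x) * normalPDF y ≤ normalCDF y - normalCDF x := by
  rw [normalCDF_sub_normalCDF, ← smul_eq_mul, ← intervalIntegral.integral_const]
  refine intervalIntegral.integral_mono_on hxy intervalIntegrable_const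
    integrable_normalPDF.intervalIntegrable fun t ht => ?_
  exact antitoneOn_normalPDF (hx.trans ht.1) (hx.trans hxy) ht.2

lemma normalCDF_sub_le_sub_mul_normalPDF {x y : ℝ} (hx : 0 ≤ x) (hxy : x ≤ y) :
    normalCDF y - normalCDF x ≤ (y - x) * normalPDF x := by
  rw [normalCDF_sub_normalCDF, ← smul_eq_mul, ← intervalIntegral.integral_const]
  refine intervalIntegral.integral_mono_on hxy integrable_normalPDF.intervalIntegrable
    intervalIntegrable_const fun t ht => ?_
  exact antitoneOn_normalPDF hx (hx.trans ht.1) ht.1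

lemma normalPDF_eq_exp_mul_normalPDF (s t : ℝ) :
    normalPDF t = exp ((s ^ 2 - t ^ 2) / 2) * normalPDF s := by
  unfold normalPDF
  rw [mul_left_comm, ← exp_add]
  ring_nf

lemma two_mul_normalCDF_le_add {c s t : ℝ} (ht : 0 ≤ t) (htc : t ≤ c) (hcs : c ≤ s)
    (h : (c - t) * exp ((s ^ 2 - t ^ 2) / 2) ≤ s - c) :
    2 * normalCDF c ≤ normalCDF t + normalCDF s := by
  have hleft := normalCDF_sub_le_sub_mul_normalPDF ht htc
  have hright := sub_mul_normalPDF_le_normalCDF_sub (ht.trans htc) hcs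
  have hmid : (c - t) * normalPDF t ≤ (s - c) * normalPDF s := by
    rw [normalPDF_eq_exp_mul_normalPDF s t, ← mul_assoc]
    exact mul_le_mul_of_nonneg_right h (by unfold normalPDF; positivity)
  linarith

lemma exp_le_one_add_mul_of_le {a x : ℝ} (ha : 0 < a) (hx : 0 ≤ x) (hxa : x ≤ a) :
    exp x ≤ 1 + (exp a - 1) / a * x := by
  have h := convexOn_exp.2 (mem_univ 0) (mem_univ a) (sub_nonneg.2 ((div_le_one ha).2 hxa))
    (div_nonneg hx ha.le) (sub_add_cancel 1 (x / a))
  simp only [smul_eq_mul, mul_zero, zero_add, exp_zero, mul_one] at h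
  rw [div_mul_cancel₀ x ha.ne'] at h
  calc exp x ≤ 1 - x / a + x / a * exp a := h
    _ = 1 + (exp a - 1) / a * x := by ring

lemma exp_five_div_seven_le : exp (5 / 7) ≤ 29 / 14 := by
  have h := exp_bound' (x := 5 / 7) (by norm_num) (by norm_num) (n := 4) (by norm_num)
  norm_num [Finset.sum_range_succ, Nat.factorial] at h
  linarith

lemma exp_le_of_six_le {m : ℝ} (hm : 6 ≤ m) :
    exp ((4 * m + 1) / (m ^ 2 - 1)) ≤ 20 * (4 * m + 3) / (3 * (16 * m - 11)) := by
  have hden : 0 < m ^ 2 - 1 := by nlinarith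
  have hx : (4 * m + 1) / (m ^ 2 - 1) ≤ 5 / 7 := by
    rw [div_le_div_iff₀ hden (by norm_num)]; nlinarith
  have hchord := exp_le_one_add_mul_of_le (by norm_num) (by positivity) hx
  have hslope : (exp (5 / 7) - 1) / (5 / 7) ≤ 3 / 2 := by
    linarith [exp_five_div_seven_le]
  have hx0 : 0 ≤ (4 * m + 1) / (m ^ 2 - 1) := by positivity
  calc exp ((4 * m + 1) / (m ^ 2 - 1))
      ≤ 1 + 3 / 2 * ((4 * m + 1) / (m ^ 2 - 1)) := by nlinarith
    _ ≤ 20 * (4 * m + 3) / (3 * (16 * m - 11)) := by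
      rw [mul_div_assoc', one_add_div hden.ne', div_le_div_iff₀ hden (by linarith)]
      have hu : 0 ≤ m - 6 := by linarith
      nlinarith [mul_nonneg (mul_nonneg hu hu) hu, mul_nonneg hu hu]

lemma two_sub_sqrt_le {m : ℝ} (hm : 0 ≤ m) :
    2 - √((4 * m + 1) / (m + 1)) ≤ 3 / (4 * m + 3) := by
  have h : (8 * m + 3) / (4 * m + 3) ≤ √((4 * m + 1) / (m + 1)) := by
    rw [le_sqrt (by positivity) (by positivity), div_pow,
      div_le_div_iff₀ (by positivity) (by positivity)]
    nlinarith
  have : 2 - (8 * m + 3) / (4 * m + 3) = 3 / (4 * m + 3) := by field_simp; ring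
  linarith

lemma le_sqrt_sub_two {m : ℝ} (hm : 1 < m) :
    20 / (16 * m - 11) ≤ √((4 * m + 1) / (m - 1)) - 2 := by
  have h16 : 0 < 16 * m - 11 := by linarith
  have h : (32 * m - 2) / (16 * m - 11) ≤ √((4 * m + 1) / (m - 1)) := by
    rw [le_sqrt (div_nonneg (by linarith) h16.le) (div_nonneg (by linarith) (by linarith)),
      div_pow, div_le_div_iff₀ (by positivity) (by linarith)]
    nlinarith
  have : (32 * m - 2) / (16 * m - 11) - 2 = 20 / (16 * m - 11) := by
    rw [div_sub' h16.ne']; ring_nf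
  linarith

lemma two_mul_normalCDF_two_le {m : ℝ} (hm : 6 ≤ m) :
    2 * normalCDF 2 ≤
      normalCDF √((4 * m + 1) / (m + 1)) + normalCDF √((4 * m + 1) / (m - 1)) := by
  have hs := le_sqrt_sub_two (by linarith : 1 < m)
  have hm1 : 0 < m - 1 := by linarith
  have hm16 : 0 < 16 * m - 11 := by linarith
  have ht : √((4 * m + 1) / (m + 1)) ≤ 2 := by
    rw [sqrt_le_iff, div_le_iff₀ (by linarith)]
    constructor <;> linarith
  have hexponent : ((√((4 * m + 1) / (m - 1))) ^ 2 - (√((4 * m + 1) / (m + 1))) ^ 2) / 2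
      = (4 * m + 1) / (m ^ 2 - 1) := by
    have : m ^ 2 - 1 = (m - 1) * (m + 1) := by ring
    rw [sq_sqrt (div_nonneg (by linarith) hm1.le), sq_sqrt (by positivity), this]
    field_simp [hm1.ne']
    ring
  refine two_mul_normalCDF_le_add (sqrt_nonneg _) ht
    (by linarith [div_pos (by norm_num : (0 : ℝ) < 20) hm16]) ?_
  rw [hexponent]
  calc (2 - √((4 * m + 1) / (m + 1))) * exp ((4 * m + 1) / (m ^ 2 - 1))
      ≤ 3 / (4 * m + 3) * (20 * (4 * m + 3) / (3 * (16 * m - 11))) :=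
        mul_le_mul (two_sub_sqrt_le (by linarith)) (exp_le_of_six_le hm) (exp_pos _).le
          (by positivity)
    _ = 20 / (16 * m - 11) := by field_simp [hm16.ne']
    _ ≤ _ := hs

theorem stmt_8 (k : ℕ) (hk : 2 ≤ k) :
    (1/2) * normalCDF ((Real.sqrt (((k : ℝ) ^ 2 + k + 1) / (2 * (k : ℝ) + 1) ^ 2))⁻¹) +
    (1/2) * normalCDF ((Real.sqrt (((k : ℝ) ^ 2 + k - 1) / (2 * (k : ℝ) + 1) ^ 2))⁻¹) ≥
      normalCDF 2 := by
  have hk' : (2 : ℝ) ≤ k := by exact_mod_cast hk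
  have hm : 6 ≤ (k : ℝ) ^ 2 + k := by nlinarith
  have key := two_mul_normalCDF_two_le hm
  have hsq : (2 * (k : ℝ) + 1) ^ 2 = 4 * ((k : ℝ) ^ 2 + k) + 1 := by ring
  rw [← sqrt_inv, ← sqrt_inv, inv_div, inv_div, hsq]
  linarith
end

section
/- Let v_1, ..., v_n be reals ordered with v_n ≥ v_1 ≥ v_{n-1} ≥ v_2 ≥ ... ≥ v_{n-2} ≥ 0 and Σ v_i² ≤ 1, ε_i iid Rademacher, X_t = Σ_{i≤t} v_i ε_i, M_t = Σ_{i≤t} v_i, and K = min index with M_K > 1 - v_{K+1} (or n-1). If K ≤ n-4 and ε_1, ..., ε_K are not all equal, then |X_K| ≤ 1 - v_{K+1} and |X_{K+1}| ≤ 1 - v_{K+2}. -/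
theorem stmt_16 (n : ℕ) (v : ℕ → ℝ)
    (hnonneg : ∀ i ∈ Finset.Icc 1 n, 0 ≤ v i)
    (hsum : ∑ i ∈ Finset.Icc 1 n, v i ^ 2 ≤ 1)
    (h1 : v n ≥ v 1) (h2 : v 1 ≥ v (n - 1)) (h3 : v (n - 1) ≥ v 2)
    (h4 : ∀ i j, 2 ≤ i → i ≤ j → j ≤ n - 2 → v j ≤ v i)
    (K : ℕ) (hK2 : 2 ≤ K) (hKn : K ≤ n - 4)
    (hmin : ∀ t, 1 ≤ t → t < K →
      ∑ i ∈ Finset.Icc 1 t, v i ≤ 1 - v (t + 1))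
    (e : ℕ → ℝ) (he : ∀ i, e i = 1 ∨ e i = -1)
    (hne : ∃ i ∈ Finset.Icc 1 K, ∃ j ∈ Finset.Icc 1 K, e i ≠ e j) :
    |∑ i ∈ Finset.Icc 1 K, v i * e i| ≤ 1 - v (K + 1) ∧
    |∑ i ∈ Finset.Icc 1 (K + 1), v i * e i| ≤ 1 - v (K + 2) := by
  have hn6 : 6 ≤ n := by omega
  have hvmin : ∀ i ∈ Finset.Icc 1 K, v K ≤ v i := by
    intro i hi
    rw [Finset.mem_Icc] at hi
    rcases Nat.lt_or_ge i 2 with h | h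
    · have hi1 : i = 1 := by omega
      subst hi1
      calc v K ≤ v 2 := h4 2 K le_rfl hK2 (by omega)
        _ ≤ v (n - 1) := h3
        _ ≤ v 1 := h2
    · exact h4 i K h hi.2 (by omega)
  set S := ∑ i ∈ Finset.Icc 1 K, v i * e i with hS
  set M := ∑ i ∈ Finset.Icc 1 K, v i with hM
  obtain ⟨i, hi, j, hj, hij⟩ := hne
  obtain ⟨p, hp, hp1, q, hq, hq1⟩ :
      ∃ p ∈ Finset.Icc 1 K, e p = 1 ∧ ∃ q ∈ Finset.Icc 1 K, e q = -1 := by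
    rcases he i with ha | ha <;> rcases he j with hb | hb
    · exact absurd (ha.trans hb.symm) hij
    · exact ⟨i, hi, ha, j, hj, hb⟩
    · exact ⟨j, hj, hb, i, hi, ha⟩
    · exact absurd (ha.trans hb.symm) hij
  have habs_e : ∀ i, e i ≤ 1 ∧ -1 ≤ e i := by
    intro i; rcases he i with h | h <;> simp [h]
  have hnn : ∀ i ∈ Finset.Icc 1 K, 0 ≤ v i := by
    intro i hi
    rw [Finset.mem_Icc] at hi
    exact hnonneg i (Finset.mem_Icc.mpr ⟨hi.1, by omega⟩)
  have h2vq : 2 * v q ≤ M - S := by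
    have heq : M - S = ∑ i ∈ Finset.Icc 1 K, v i * (1 - e i) := by
      rw [hM, hS, ← Finset.sum_sub_distrib]
      exact Finset.sum_congr rfl fun i _ => by ring
    rw [heq]
    calc 2 * v q = v q * (1 - e q) := by rw [hq1]; ring
      _ ≤ _ := Finset.single_le_sum (f := fun i => v i * (1 - e i))
          (fun i hi => mul_nonneg (hnn i hi) (by linarith [(habs_e i).1])) hq
  have h2vp : 2 * v p ≤ M + S := by
    have heq : M + S = ∑ i ∈ Finset.Icc 1 K, v i * (1 + e i) := by
      rw [hM, hS, ← Finset.sum_add_distrib]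
      exact Finset.sum_congr rfl fun i _ => by ring
    rw [heq]
    calc 2 * v p = v p * (1 + e p) := by rw [hp1]; ring
      _ ≤ _ := Finset.single_le_sum (f := fun i => v i * (1 + e i))
          (fun i hi => mul_nonneg (hnn i hi) (by linarith [(habs_e i).2])) hp
  have hMsplit : M = (∑ i ∈ Finset.Icc 1 (K - 1), v i) + v K := by
    have h : ∑ i ∈ Finset.Icc 1 (K - 1 + 1), v i
        = (∑ i ∈ Finset.Icc 1 (K - 1), v i) + v (K - 1 + 1) :=
      Finset.sum_Icc_succ_top (by omega) v
    have hK1 : K - 1 + 1 = K := by omega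
    rw [hK1] at h
    rw [hM, h]
  have hmin' : ∑ i ∈ Finset.Icc 1 (K - 1), v i ≤ 1 - v K := by
    have := hmin (K - 1) (by omega) (by omega)
    have hK1 : K - 1 + 1 = K := by omega
    rwa [hK1] at this
  have hvKnn : 0 ≤ v K := hnn K (Finset.mem_Icc.mpr ⟨by omega, le_rfl⟩)
  have hvK1 : v (K + 1) ≤ v K := h4 K (K + 1) hK2 (by omega) (by omega)
  have hvK2 : v (K + 2) ≤ v K := h4 K (K + 2) hK2 (by omega) (by omega)
  have hvK1nn : 0 ≤ v (K + 1) := hnonneg (K + 1) (Finset.mem_Icc.mpr ⟨by omega, by omega⟩)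
  have hvq := hvmin q hq
  have hvp := hvmin p hp
  have habsS : |S| ≤ 1 - 2 * v K := by
    rw [abs_le]
    constructor <;> linarith
  constructor
  · calc |S| ≤ 1 - 2 * v K := habsS
      _ ≤ 1 - v (K + 1) := by linarith
  · have hsplit : ∑ i ∈ Finset.Icc 1 (K + 1), v i * e i = S + v (K + 1) * e (K + 1) :=
      Finset.sum_Icc_succ_top (by omega) _
    rw [hsplit]
    have heK1 : |v (K + 1) * e (K + 1)| = v (K + 1) := by
      rw [abs_mul, abs_of_nonneg hvK1nn]
      rcases he (K + 1) with h | h <;> simp [h]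
    calc |S + v (K + 1) * e (K + 1)| ≤ |S| + |v (K + 1) * e (K + 1)| := abs_add_le _ _
      _ = |S| + v (K + 1) := by rw [heK1]
      _ ≤ 1 - v (K + 2) := by linarith
end
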